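/- arXiv:2008.09429 — 4 statements merged into one kernel-verified Lean document; each statement's English description precedes it below -/
import Mathlib

section
/- For every n ∈ ℕ and every t ∈ (0,T], the left limit gⁿ(t−) = lim_{s↑t} gⁿ(s) exists in ℝ ∪ {−∞}, satisfies gⁿ(t−) ≤ gⁿ(t), and is given by the formula gⁿ(t−) = −n·t + inf{α ∈ ℝ : ∫_{(0,t)} (g(s) + n·s − α)⁺ dμ(s) = 0} (the infimum over α ∈ ℝ, equal to −∞ when the set of such α is all of ℝ). -/
open MeasureTheory Filter Topology Set

/-- `gnProc μ g n t` is the process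
`gⁿ(t) = -n·t + inf{α ∈ ℝ : ∫_{(0,t]} (g(s) + n·s - α)⁺ dμ(s) = 0}`,
with values in `EReal` (it equals `⊥` exactly when `μ((0,t]) = 0`). -/
noncomputable def gnProc (μ : Measure ℝ) (g : ℝ → ℝ) (n : ℕ) (t : ℝ) : EReal :=
  ((-((n : ℝ) * t) : ℝ) : EReal) +
    sInf ((fun a : ℝ => (a : EReal)) ''
      {a : ℝ | ∫⁻ s in Set.Ioc (0 : ℝ) t, ENNReal.ofReal (g s + (n : ℝ) * s - a) ∂μ = 0})

/-!
Write `E(s) = inf {a : ∫_{(0,s]} (h - a)⁺ dμ = 0}` with `h(s) = g(s) + n·s`, so that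
`gⁿ(s) = -n·s + E(s)`. The admissible levels form an upper set of `ℝ` that shrinks as `s` grows,
so `E` is monotone and has the left limit `sup_{s<t} E(s)`. The levels admissible for `(0,t)`
are exactly those admissible for every `(0,s]`, `s < t`, because `(0,t)` is a countable union of
such intervals; and the infimum of an intersection of upper sets of reals is the supremum of their
infima. Hence the left limit of `E` at `t` is the same infimum taken over `(0,t)`.
-/

theorem EReal.sInf_coe_image_iInter_of_isUpperSet {ι : Sort*} {A : ι → Set ℝ}
    (hA : ∀ i, IsUpperSet (A i)) :
    sInf (((↑) : ℝ → EReal) '' ⋂ i, A i) = ⨆ i, sInf (((↑) : ℝ → EReal) '' A i) := by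
  refine le_antisymm (le_of_forall_gt_imp_ge_of_dense fun c hc => ?_)
    (iSup_le fun i => sInf_le_sInf (image_mono (iInter_subset A i)))
  obtain ⟨b, hb, hbc⟩ := EReal.exists_between_coe_real hc
  have hbA : b ∈ ⋂ i, A i := mem_iInter.2 fun i => by
    obtain ⟨_, ⟨a, ha, rfl⟩, hab⟩ := sInf_lt_iff.1 ((le_iSup _ i).trans_lt hb)
    exact hA i (EReal.coe_lt_coe_iff.1 hab).le ha
  exact (sInf_le (mem_image_of_mem _ hbA)).trans hbc.le

theorem setLIntegral_Ioo_eq_zero_iff {μ : Measure ℝ} {f : ℝ → ENNReal} {a b : ℝ} :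
    ∫⁻ x in Ioo a b, f x ∂μ = 0 ↔ ∀ s < b, ∫⁻ x in Ioc a s, f x ∂μ = 0 := by
  refine ⟨fun h s hs => le_antisymm ((lintegral_mono_set (Ioc_subset_Ioo_right hs)).trans h.le)
    zero_le, fun h => le_antisymm ?_ zero_le⟩
  have hcover : Ioo a b ⊆ ⋃ k : ℕ, Ioc a (b - 1 / (k + 1)) := fun x hx => by
    obtain ⟨k, hk⟩ := exists_nat_one_div_lt (sub_pos.2 hx.2)
    exact mem_iUnion.2 ⟨k, hx.1, by linarith⟩
  calc ∫⁻ x in Ioo a b, f x ∂μ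
      ≤ ∫⁻ x in ⋃ k : ℕ, Ioc a (b - 1 / (k + 1)), f x ∂μ := lintegral_mono_set hcover
    _ ≤ ∑' k : ℕ, ∫⁻ x in Ioc a (b - 1 / (k + 1)), f x ∂μ := lintegral_iUnion_le _ _
    _ = 0 := ENNReal.tsum_eq_zero.2 fun k => h _ (sub_lt_self b Nat.one_div_pos_of_nat)

def zeroExcessLevels (μ : Measure ℝ) (h : ℝ → ℝ) (s : Set ℝ) : Set ℝ :=
  {a | ∫⁻ x in s, ENNReal.ofReal (h x - a) ∂μ = 0}

/-- For measurable `h` this is the `μ`-essential supremum of `h` on `s`. -/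
noncomputable def excessThreshold (μ : Measure ℝ) (h : ℝ → ℝ) (s : Set ℝ) : EReal :=
  sInf (((↑) : ℝ → EReal) '' zeroExcessLevels μ h s)

section

variable {μ : Measure ℝ} {h : ℝ → ℝ}

theorem zeroExcessLevels_anti {s s' : Set ℝ} (hss : s ⊆ s') :
    zeroExcessLevels μ h s' ⊆ zeroExcessLevels μ h s :=
  fun _ ha => le_antisymm ((lintegral_mono_set hss).trans ha.le) zero_le

theorem isUpperSet_zeroExcessLevels (s : Set ℝ) : IsUpperSet (zeroExcessLevels μ h s) :=
  fun a b hab ha => le_antisymm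
    ((lintegral_mono fun _ => ENNReal.ofReal_le_ofReal (by linarith)).trans ha.le) zero_le

theorem zeroExcessLevels_Ioo (a b : ℝ) :
    zeroExcessLevels μ h (Ioo a b) = ⋂ s : Iio b, zeroExcessLevels μ h (Ioc a s) := by
  ext c
  simp only [zeroExcessLevels, mem_ofPred_eq, mem_iInter, Subtype.forall, mem_Iio]
  exact setLIntegral_Ioo_eq_zero_iff

theorem excessThreshold_mono {s s' : Set ℝ} (hss : s ⊆ s') :
    excessThreshold μ h s ≤ excessThreshold μ h s' :=
  sInf_le_sInf (image_mono (zeroExcessLevels_anti hss))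

theorem tendsto_excessThreshold_Ioc_nhdsLT (a b : ℝ) :
    Tendsto (fun s => excessThreshold μ h (Ioc a s)) (𝓝[<] b)
      (𝓝 (excessThreshold μ h (Ioo a b))) := by
  have hmono : Monotone fun s => excessThreshold μ h (Ioc a s) :=
    fun _ _ hst => excessThreshold_mono (Ioc_subset_Ioc_right hst)
  convert hmono.tendsto_nhdsLT b using 2
  rw [sSup_image', excessThreshold, zeroExcessLevels_Ioo,
    EReal.sInf_coe_image_iInter_of_isUpperSet fun _ => isUpperSet_zeroExcessLevels _]
  rfl

end

theorem stmt_3_general (μ : Measure ℝ)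
    (g : ℝ → ℝ)
    (n : ℕ) (t : ℝ) :
    ∃ Lt : EReal,
      Tendsto (gnProc μ g n) (𝓝[<] t) (𝓝 Lt) ∧
      Lt ≤ gnProc μ g n t ∧
      Lt = ((-((n : ℝ) * t) : ℝ) : EReal) +
        sInf ((fun a : ℝ => (a : EReal)) ''
          {a : ℝ | ∫⁻ s in Set.Ioo (0 : ℝ) t, ENNReal.ofReal (g s + (n : ℝ) * s - a) ∂μ = 0}) := by
  set h : ℝ → ℝ := fun s => g s + n * s
  have hdrift : Tendsto (fun s : ℝ => ((-((n : ℝ) * s) : ℝ) : EReal)) (𝓝[<] t)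
      (𝓝 ((-((n : ℝ) * t) : ℝ) : EReal)) :=
    (continuous_coe_real_ereal.comp (by fun_prop)).continuousAt.tendsto.mono_left
      nhdsWithin_le_nhds
  refine ⟨((-((n : ℝ) * t) : ℝ) : EReal) + excessThreshold μ h (Ioo 0 t), ?_, ?_, rfl⟩
  · exact (EReal.continuousAt_add (Or.inl (EReal.coe_ne_top _))
      (Or.inl (EReal.coe_ne_bot _))).tendsto.comp
        (hdrift.prodMk_nhds (tendsto_excessThreshold_Ioc_nhdsLT 0 t))
  · exact add_le_add_right (excessThreshold_mono Ioo_subset_Ioc_self) _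

/-- For every `n ∈ ℕ` and `t ∈ (0,T]`, the left limit `gⁿ(t−) = lim_{s↑t} gⁿ(s)` exists in
`ℝ ∪ {−∞}`, satisfies `gⁿ(t−) ≤ gⁿ(t)`, and is given by
`gⁿ(t−) = −n·t + inf{α ∈ ℝ : ∫_{(0,t)} (g(s) + n·s − α)⁺ dμ(s) = 0}`. -/
theorem stmt_3 (T : ℝ) (hT : 0 < T) (μ : Measure ℝ) [IsFiniteMeasure μ]
    (hsupp : μ (Set.Ioc (0 : ℝ) T)ᶜ = 0)
    (g : ℝ → ℝ) (hg : Measurable g)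
    (α₀ : ℝ) (hbdd : ∀ᵐ s ∂μ, s ∈ Set.Ioc (0 : ℝ) T → g s ≤ α₀)
    (n : ℕ) (t : ℝ) (ht : t ∈ Set.Ioc (0 : ℝ) T) :
    ∃ Lt : EReal,
      Tendsto (gnProc μ g n) (𝓝[<] t) (𝓝 Lt) ∧
      Lt ≤ gnProc μ g n t ∧
      Lt = ((-((n : ℝ) * t) : ℝ) : EReal) +
        sInf ((fun a : ℝ => (a : EReal)) ''
          {a : ℝ | ∫⁻ s in Set.Ioo (0 : ℝ) t, ENNReal.ofReal (g s + (n : ℝ) * s - a) ∂μ = 0}) :=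
  stmt_3_general μ g n t
end

section
/- For every n ∈ ℕ and every t ∈ (0,T] with μ({t}) > 0, one has gⁿ(t) = max(gⁿ(t−), g(t)), where gⁿ(t−) = lim_{s↑t} gⁿ(s) is the left limit (which exists since s ↦ n·s + gⁿ(s) is nondecreasing) and the maximum is taken in ℝ ∪ {−∞}. -/
/-!
For measurable `g`, the infimum in the definition of `gⁿ(u) + n u` is the `μ`-essential supremum
of `h(s) = g(s) + n s` over `(0,u]`. This is monotone in `u`, and its left limit at `t` is the
essential supremum over `(0,t)`, since `(0,t)` is a countable union of intervals `(0,u]`, `u < t`.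
Splitting `(0,t] = (0,t) ∪ {t}` with `μ{t} > 0` makes the essential supremum over `(0,t]` the
maximum of this limit and `h(t)`.
-/

open MeasureTheory Filter Topology Set

section EssSup

variable {α : Type*} [MeasurableSpace α] {μ : Measure α}

theorem lintegral_ofReal_sub_eq_zero_iff {f : α → ℝ} (hf : AEMeasurable f μ) (a : ℝ) :
    ∫⁻ x, ENNReal.ofReal (f x - a) ∂μ = 0 ↔ ∀ᵐ x ∂μ, f x ≤ a := by
  rw [lintegral_eq_zero_iff' (hf.sub_const a).ennreal_ofReal]
  simp only [EventuallyEq, Pi.zero_apply, ENNReal.ofReal_eq_zero, sub_nonpos]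

theorem sInf_coe_setOf_ae_le_eq_essSup (f : α → ℝ) :
    sInf ((fun a : ℝ => (a : EReal)) '' {a | ∀ᵐ x ∂μ, f x ≤ a}) =
      essSup (fun x => (f x : EReal)) μ := by
  rw [essSup, limsup_eq]
  refine le_antisymm (le_sInf fun b hb => le_of_forall_gt_imp_ge_of_dense fun c hbc => ?_)
    (sInf_le_sInf ?_)
  · obtain ⟨r, hbr, hrc⟩ := EReal.lt_iff_exists_real_btwn.1 hbc
    have hb : ∀ᵐ x ∂μ, (f x : EReal) ≤ b := hb
    have hr : ∀ᵐ x ∂μ, f x ≤ r := hb.mono fun x hx => EReal.coe_le_coe_iff.1 (hx.trans hbr.le)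
    exact (sInf_le (mem_image_of_mem (fun a : ℝ => (a : EReal)) hr)).trans hrc.le
  · rintro _ ⟨a, ha : ∀ᵐ x ∂μ, f x ≤ a, rfl⟩
    exact eventually_map.2 (ha.mono fun x hx => EReal.coe_le_coe_iff.2 hx)

variable {β : Type*} [CompleteLinearOrder β]

theorem essSup_restrict_singleton [MeasurableSingletonClass α] (f : α → β) {x : α}
    (hx : μ {x} ≠ 0) : essSup f (μ.restrict {x}) = f x := by
  rw [Measure.restrict_singleton, essSup_ennreal_smul_measure hx]
  simp [essSup, ae_dirac_eq, limsup, limsSup, Set.Ici_def]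

variable [TopologicalSpace β] [FirstCountableTopology β] [OrderTopology β]

theorem essSup_restrict_union (f : α → β) (s t : Set α) :
    essSup f (μ.restrict (s ∪ t)) = max (essSup f (μ.restrict s)) (essSup f (μ.restrict t)) := by
  refine le_antisymm (essSup_le_of_ae_le _ ((ae_restrict_union_iff _ _ _).2 ⟨?_, ?_⟩))
    (max_le (essSup_mono_measure' (Measure.restrict_mono subset_union_left le_rfl))
      (essSup_mono_measure' (Measure.restrict_mono subset_union_right le_rfl)))
  · filter_upwards [ae_le_essSup (f := f)] with x hx using hx.trans le_sup_left
  · filter_upwards [ae_le_essSup (f := f)] with x hx using hx.trans le_sup_right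

theorem essSup_restrict_iUnion {ι : Type*} [Countable ι] (f : α → β) (s : ι → Set α) :
    essSup f (μ.restrict (⋃ i, s i)) = ⨆ i, essSup f (μ.restrict (s i)) := by
  refine le_antisymm (essSup_le_of_ae_le _ ((ae_restrict_iUnion_iff _ _).2 fun i => ?_))
    (iSup_le fun i => essSup_mono_measure' (Measure.restrict_mono (subset_iUnion s i) le_rfl))
  filter_upwards [ae_le_essSup (f := f)] with x hx
  exact hx.trans (le_iSup (fun i => essSup f (μ.restrict (s i))) i)

end EssSup

section RealLine

variable {β : Type*} [CompleteLinearOrder β] [TopologicalSpace β] [FirstCountableTopology β]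
  [OrderTopology β] {μ : Measure ℝ}

theorem essSup_restrict_Ioc_eq_max (f : ℝ → β) {a b : ℝ} (hab : a < b) (hb : μ {b} ≠ 0) :
    essSup f (μ.restrict (Ioc a b)) = max (essSup f (μ.restrict (Ioo a b))) (f b) := by
  rw [← Ioo_union_right hab, essSup_restrict_union, essSup_restrict_singleton f hb]

theorem tendsto_essSup_restrict_Ioc_nhdsLT (f : ℝ → β) (a b : ℝ) :
    Tendsto (fun u => essSup f (μ.restrict (Ioc a u))) (𝓝[<] b)
      (𝓝 (essSup f (μ.restrict (Ioo a b)))) := by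
  have hmono : Monotone fun u => essSup f (μ.restrict (Ioc a u)) := fun u v huv =>
    essSup_mono_measure' (Measure.restrict_mono (Ioc_subset_Ioc_right huv) le_rfl)
  convert hmono.tendsto_nhdsLT b using 2
  refine le_antisymm ?_ (sSup_le ?_)
  · obtain ⟨u, -, hub, hu⟩ := exists_seq_strictMono_tendsto b
    have hcover : Ioo a b ⊆ ⋃ k, Ioc a (u k) := fun x ⟨hax, hxb⟩ =>
      let ⟨k, hk⟩ := (hu.eventually (lt_mem_nhds hxb)).exists
      mem_iUnion.2 ⟨k, hax, hk.le⟩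
    calc essSup f (μ.restrict (Ioo a b))
        ≤ essSup f (μ.restrict (⋃ k, Ioc a (u k))) :=
          essSup_mono_measure' (Measure.restrict_mono hcover le_rfl)
      _ = ⨆ k, essSup f (μ.restrict (Ioc a (u k))) := essSup_restrict_iUnion f _
      _ ≤ _ := iSup_le fun k =>
          le_sSup (mem_image_of_mem (fun u => essSup f (μ.restrict (Ioc a u))) (hub k))
  · rintro _ ⟨u, hub, rfl⟩
    exact essSup_mono_measure' (Measure.restrict_mono (Ioc_subset_Ioo_right hub) le_rfl)

end RealLine

theorem EReal.tendsto_coe_add {ι : Type*} {l : Filter ι} {f : ι → ℝ} {F : ι → EReal} {x : ℝ}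
    {L : EReal} (hf : Tendsto f l (𝓝 x)) (hF : Tendsto F l (𝓝 L)) :
    Tendsto (fun i => (f i : EReal) + F i) l (𝓝 (x + L)) :=
  (EReal.continuousAt_add (Or.inl (EReal.coe_ne_top x)) (Or.inl (EReal.coe_ne_bot x))).tendsto.comp
    ((continuous_coe_real_ereal.tendsto x |>.comp hf).prodMk_nhds hF)

theorem gnProc_eq_essSup {μ : Measure ℝ} {g : ℝ → ℝ} (hg : Measurable g) (n : ℕ) (u : ℝ) :
    gnProc μ g n u = ((-((n : ℝ) * u) : ℝ) : EReal) +
      essSup (fun s => ((g s + n * s : ℝ) : EReal)) (μ.restrict (Ioc 0 u)) := by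
  have hmeas : AEMeasurable (fun s => g s + n * s) (μ.restrict (Ioc 0 u)) :=
    (hg.add (measurable_const.mul measurable_id)).aemeasurable
  rw [gnProc, ← sInf_coe_setOf_ae_le_eq_essSup]
  simp_rw [lintegral_ofReal_sub_eq_zero_iff hmeas]

theorem stmt_4_general (T : ℝ) (μ : Measure ℝ)
    (g : ℝ → ℝ) (hg : Measurable g)
    (n : ℕ) (t : ℝ) (ht : t ∈ Set.Ioc (0 : ℝ) T) (hatom : 0 < μ {t}) :
    ∃ Lt : EReal,
      Tendsto (gnProc μ g n) (𝓝[<] t) (𝓝 Lt) ∧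
      gnProc μ g n t = max Lt ((g t : ℝ) : EReal) := by
  set φ : ℝ → EReal := fun s => ((g s + n * s : ℝ) : EReal)
  have hgn : ∀ u, gnProc μ g n u =
      ((-((n : ℝ) * u) : ℝ) : EReal) + essSup φ (μ.restrict (Ioc 0 u)) :=
    gnProc_eq_essSup hg n
  refine ⟨((-((n : ℝ) * t) : ℝ) : EReal) + essSup φ (μ.restrict (Ioo 0 t)), ?_, ?_⟩
  · have hshift : Tendsto (fun u : ℝ => -((n : ℝ) * u)) (𝓝[<] t) (𝓝 (-((n : ℝ) * t))) :=
      (continuous_const.mul continuous_id).neg.continuousAt.tendsto.mono_left nhdsWithin_le_nhds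
    exact (tendsto_congr hgn).2 <|
      EReal.tendsto_coe_add hshift (tendsto_essSup_restrict_Ioc_nhdsLT φ 0 t)
  · have hadd_mono : Monotone (((-((n : ℝ) * t) : ℝ) : EReal) + ·) := fun _ _ h =>
      add_le_add le_rfl h
    rw [hgn, essSup_restrict_Ioc_eq_max φ ht.1 hatom.ne', hadd_mono.map_max, ← EReal.coe_add]
    ring_nf

/-- For every `n ∈ ℕ` and `t ∈ (0,T]` with `μ({t}) > 0`, one has
`gⁿ(t) = max(gⁿ(t−), g(t))`, where `gⁿ(t−) = lim_{s↑t} gⁿ(s)` is the left limit (which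
exists) and the maximum is taken in `ℝ ∪ {−∞}`. -/
theorem stmt_4 (T : ℝ) (hT : 0 < T) (μ : Measure ℝ) [IsFiniteMeasure μ]
    (hsupp : μ (Set.Ioc (0 : ℝ) T)ᶜ = 0)
    (g : ℝ → ℝ) (hg : Measurable g)
    (α₀ : ℝ) (hbdd : ∀ᵐ s ∂μ, s ∈ Set.Ioc (0 : ℝ) T → g s ≤ α₀)
    (n : ℕ) (t : ℝ) (ht : t ∈ Set.Ioc (0 : ℝ) T) (hatom : 0 < μ {t}) :
    ∃ Lt : EReal,
      Tendsto (gnProc μ g n) (𝓝[<] t) (𝓝 Lt) ∧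
      gnProc μ g n t = max Lt ((g t : ℝ) : EReal) :=
  stmt_4_general T μ g hg n t ht hatom
end

section
/- For every n ∈ ℕ and every t ∈ (0,T] with μ({t}) = 0, one has gⁿ(t) = gⁿ(t−), where gⁿ(t−) = lim_{s↑t} gⁿ(s) is the left limit (which exists since s ↦ n·s + gⁿ(s) is nondecreasing). -/
/-! The infimum in `gnProc μ g n t` is the `μ`-essential supremum of `s ↦ g s + n s` on `(0, t]`,
which increases with `t`. It is left continuous at a non-atom `t`: a level exceeded on no
`(0, u]` with `u < t` is exceeded only on a null subset of `(0, t)`, hence of `(0, t]`. Adding the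
continuous term `-n t` keeps left continuity. -/

open MeasureTheory Filter Topology Set

section ZeroExcessLevel

variable {α : Type*} [MeasurableSpace α]

/-- For measurable `f`, the `μ`-essential supremum of `f` on `s`: `⊥` if `μ s = 0`, `⊤` if `f` is
not essentially bounded above on `s`. -/
noncomputable def zeroExcessLevel (μ : Measure α) (f : α → ℝ) (s : Set α) : EReal :=
  sInf ((fun a : ℝ => (a : EReal)) '' {a : ℝ | ∫⁻ x in s, ENNReal.ofReal (f x - a) ∂μ = 0})

variable {μ : Measure α} {f : α → ℝ} {s s' : Set α} {c : ℝ}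

theorem zeroExcessLevel_mono (hss' : s ⊆ s') :
    zeroExcessLevel μ f s ≤ zeroExcessLevel μ f s' := by
  refine sInf_le_sInf (image_mono fun a ha => ?_)
  exact nonpos_iff_eq_zero.1 (ha ▸ lintegral_mono_set hss')

theorem zeroExcessLevel_le (hc : ∫⁻ x in s, ENNReal.ofReal (f x - c) ∂μ = 0) :
    zeroExcessLevel μ f s ≤ c :=
  sInf_le ⟨c, hc, rfl⟩

theorem lintegral_ofReal_sub_eq_zero_of_zeroExcessLevel_lt (hc : zeroExcessLevel μ f s < c) :
    ∫⁻ x in s, ENNReal.ofReal (f x - c) ∂μ = 0 := by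
  obtain ⟨_, ⟨a, ha, rfl⟩, hac⟩ := sInf_lt_iff.1 hc
  have hac : a ≤ c := (EReal.coe_lt_coe_iff.1 hac).le
  refine nonpos_iff_eq_zero.1 (le_of_le_of_eq ?_ ha)
  exact lintegral_mono fun x => ENNReal.ofReal_le_ofReal (by linarith)

end ZeroExcessLevel

theorem setLIntegral_Ioc_eq_zero_of_forall_lt {μ : Measure ℝ} {φ : ℝ → ENNReal} {a t : ℝ}
    (hatom : μ {t} = 0) (h : ∀ u < t, ∫⁻ x in Ioc a u, φ x ∂μ = 0) :
    ∫⁻ x in Ioc a t, φ x ∂μ = 0 := by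
  have hcover : Ioo a t ⊆ ⋃ q : {q : ℚ // (q : ℝ) < t}, Ioc a (q : ℝ) := fun x hx =>
    let ⟨q, hxq, hqt⟩ := exists_rat_btwn hx.2
    mem_iUnion.2 ⟨⟨q, hqt⟩, hx.1, hxq.le⟩
  rw [← setLIntegral_congr (Ioo_ae_eq_Ioc' hatom)]
  refine nonpos_iff_eq_zero.1 ((lintegral_mono_set hcover).trans
    ((lintegral_iUnion_le _ _).trans_eq ?_))
  simp [fun q : {q : ℚ // (q : ℝ) < t} => h q q.2]

theorem continuousWithinAt_zeroExcessLevel_Ioc {μ : Measure ℝ} (f : ℝ → ℝ) (a : ℝ) {t : ℝ}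
    (hatom : μ {t} = 0) :
    ContinuousWithinAt (fun u => zeroExcessLevel μ f (Ioc a u)) (Iio t) t := by
  have hmono : Monotone fun u => zeroExcessLevel μ f (Ioc a u) := fun u v huv =>
    zeroExcessLevel_mono (Ioc_subset_Ioc_right huv)
  have hsup : sSup ((fun u => zeroExcessLevel μ f (Ioc a u)) '' Iio t) =
      zeroExcessLevel μ f (Ioc a t) := by
    refine le_antisymm (sSup_le ?_) (EReal.le_of_forall_lt_iff_le.1 fun c hc => ?_)
    · rintro _ ⟨u, hu, rfl⟩
      exact hmono (le_of_lt hu)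
    · refine zeroExcessLevel_le (setLIntegral_Ioc_eq_zero_of_forall_lt hatom fun u hu => ?_)
      have hu_le : zeroExcessLevel μ f (Ioc a u) ≤
          sSup ((fun u => zeroExcessLevel μ f (Ioc a u)) '' Iio t) :=
        le_sSup (mem_image_of_mem _ (mem_Iio.2 hu))
      exact lintegral_ofReal_sub_eq_zero_of_zeroExcessLevel_lt (hu_le.trans_lt hc)
  have := hmono.tendsto_nhdsLT t
  rwa [hsup] at this

theorem continuousWithinAt_gnProc (μ : Measure ℝ) (g : ℝ → ℝ) (n : ℕ) {t : ℝ}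
    (hatom : μ {t} = 0) : ContinuousWithinAt (gnProc μ g n) (Iio t) t := by
  have hlin : Continuous fun u : ℝ => ((-((n : ℝ) * u) : ℝ) : EReal) :=
    continuous_coe_real_ereal.comp (by fun_prop)
  exact (EReal.continuousAt_add (Or.inl (EReal.coe_ne_top _))
    (Or.inl (EReal.coe_ne_bot _))).comp_continuousWithinAt_of_eq
    (hlin.continuousWithinAt.prodMk (continuousWithinAt_zeroExcessLevel_Ioc _ 0 hatom)) rfl

theorem stmt_5_general (μ : Measure ℝ) (g : ℝ → ℝ) (n : ℕ) (t : ℝ) (hatom : μ {t} = 0) :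
    ∃ Lt : EReal,
      Tendsto (gnProc μ g n) (𝓝[<] t) (𝓝 Lt) ∧
      gnProc μ g n t = Lt :=
  ⟨_, continuousWithinAt_gnProc μ g n hatom, rfl⟩

/-- For every `n ∈ ℕ` and `t ∈ (0,T]` with `μ({t}) = 0`, one has `gⁿ(t) = gⁿ(t−)`, where
`gⁿ(t−) = lim_{s↑t} gⁿ(s)` is the left limit (which exists). -/
theorem stmt_5 (T : ℝ) (hT : 0 < T) (μ : Measure ℝ) [IsFiniteMeasure μ]
    (hsupp : μ (Set.Ioc (0 : ℝ) T)ᶜ = 0)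
    (g : ℝ → ℝ) (hg : Measurable g)
    (α₀ : ℝ) (hbdd : ∀ᵐ s ∂μ, s ∈ Set.Ioc (0 : ℝ) T → g s ≤ α₀)
    (n : ℕ) (t : ℝ) (ht : t ∈ Set.Ioc (0 : ℝ) T) (hatom : μ {t} = 0) :
    ∃ Lt : EReal,
      Tendsto (gnProc μ g n) (𝓝[<] t) (𝓝 Lt) ∧
      gnProc μ g n t = Lt :=
  stmt_5_general μ g n t hatom
end

section
/- The set {t ∈ (0,T] : g*₋(t) < g*(t)} is contained in the set of atoms {t ∈ (0,T] : μ({t}) > 0} of μ, and is therefore countable. -/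
open MeasureTheory Filter Topology Set

/-- `gStar μ g t = inf_{n ∈ ℕ} gⁿ(t)`. -/
noncomputable def gStar (μ : Measure ℝ) (g : ℝ → ℝ) (t : ℝ) : EReal :=
  ⨅ n : ℕ, gnProc μ g n t

theorem measure_Ioc_eq_zero_of_eventually_nhdsLT {ν : Measure ℝ} {a t : ℝ} (ht : ν {t} = 0)
    (h : ∀ᶠ s in 𝓝[<] t, ν (Ioc a s) = 0) : ν (Ioc a t) = 0 := by
  obtain ⟨l, hl, hlt⟩ := mem_nhdsLT_iff_exists_Ioo_subset.mp h
  obtain ⟨u, -, hu_mem, hu_lim⟩ := exists_seq_strictMono_tendsto' (mem_Iio.mp hl)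
  have hcover : Ioc a t ⊆ (⋃ k, Ioc a (u k)) ∪ {t} := by
    intro x ⟨hax, hxt⟩
    rcases hxt.lt_or_eq with hxt | rfl
    · obtain ⟨k, hk⟩ := (hu_lim.eventually (lt_mem_nhds hxt)).exists
      exact Or.inl (mem_iUnion.mpr ⟨k, hax, hk.le⟩)
    · exact Or.inr rfl
  exact measure_mono_null hcover
    (measure_union_null (measure_iUnion_null fun k => hlt (hu_mem k)) ht)

theorem setLIntegral_Ioc_eq_zero_of_eventually_nhdsLT {μ : Measure ℝ} {f : ℝ → ENNReal}
    {a t : ℝ} (ht : μ {t} = 0) (h : ∀ᶠ s in 𝓝[<] t, ∫⁻ u in Ioc a s, f u ∂μ = 0) :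
    ∫⁻ u in Ioc a t, f u ∂μ = 0 := by
  simp only [← withDensity_apply f measurableSet_Ioc] at h ⊢
  exact measure_Ioc_eq_zero_of_eventually_nhdsLT (withDensity_absolutelyContinuous μ f ht) h

def zeroLevels (μ : Measure ℝ) (g : ℝ → ℝ) (n : ℕ) (t : ℝ) : Set ℝ :=
  {a : ℝ | ∫⁻ s in Ioc (0 : ℝ) t, ENNReal.ofReal (g s + (n : ℝ) * s - a) ∂μ = 0}

theorem zeroLevels_mono {μ : Measure ℝ} {g : ℝ → ℝ} {n : ℕ} {t a b : ℝ} (hab : a ≤ b)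
    (ha : a ∈ zeroLevels μ g n t) : b ∈ zeroLevels μ g n t :=
  nonpos_iff_eq_zero.mp <| ha ▸ lintegral_mono fun _ => ENNReal.ofReal_le_ofReal (by linarith)

theorem gnProc_eq (μ : Measure ℝ) (g : ℝ → ℝ) (n : ℕ) (t : ℝ) :
    gnProc μ g n t = ((-((n : ℝ) * t) : ℝ) : EReal) + sInf ((↑) '' zeroLevels μ g n t) := rfl

theorem mem_zeroLevels_of_gnProc_lt {μ : Measure ℝ} {g : ℝ → ℝ} {n : ℕ} {t b : ℝ}
    (h : gnProc μ g n t < b) : (n : ℝ) * t + b ∈ zeroLevels μ g n t := by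
  have hinf : sInf ((↑) '' zeroLevels μ g n t) < (((n : ℝ) * t + b : ℝ) : EReal) := by
    have := EReal.add_lt_add_left_coe h ((n : ℝ) * t)
    rwa [gnProc_eq, ← add_assoc, ← EReal.coe_add, add_neg_cancel, EReal.coe_zero, zero_add,
      ← EReal.coe_add] at this
  obtain ⟨_, ⟨a, ha, rfl⟩, hab⟩ := sInf_lt_iff.mp hinf
  exact zeroLevels_mono (EReal.coe_lt_coe_iff.mp hab).le ha

theorem gnProc_le_of_mem_zeroLevels {μ : Measure ℝ} {g : ℝ → ℝ} {n : ℕ} {t b : ℝ}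
    (h : (n : ℝ) * t + b ∈ zeroLevels μ g n t) : gnProc μ g n t ≤ b := by
  calc gnProc μ g n t ≤ ((-((n : ℝ) * t) : ℝ) : EReal) + (((n : ℝ) * t + b : ℝ) : EReal) :=
        add_le_add_right (sInf_le (mem_image_of_mem _ h)) _
    _ = b := by rw [← EReal.coe_add]; ring_nf

theorem gnProc_le_of_tendsto_nhdsLT {μ : Measure ℝ} {g : ℝ → ℝ} {n : ℕ} {t : ℝ} {l : EReal}
    (ht : μ {t} = 0) (hl : Tendsto (gnProc μ g n) (𝓝[<] t) (𝓝 l)) : gnProc μ g n t ≤ l := by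
  refine EReal.le_of_forall_lt_iff_le.mp fun b hb => gnProc_le_of_mem_zeroLevels ?_
  refine setLIntegral_Ioc_eq_zero_of_eventually_nhdsLT ht ?_
  filter_upwards [hl.eventually (gt_mem_nhds hb), self_mem_nhdsWithin] with s hs hst
  exact zeroLevels_mono (by gcongr; exact le_of_lt hst) (mem_zeroLevels_of_gnProc_lt hs)

theorem stmt_9_general (T : ℝ) (μ : Measure ℝ) [IsFiniteMeasure μ]
    (g : ℝ → ℝ)
    (L : ℕ → ℝ → EReal)
    (hL : ∀ n : ℕ, ∀ t ∈ Set.Ioc (0 : ℝ) T, Tendsto (gnProc μ g n) (𝓝[<] t) (𝓝 (L n t))) :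
    {t ∈ Set.Ioc (0 : ℝ) T | (⨅ n : ℕ, L n t) < gStar μ g t} ⊆ {t : ℝ | 0 < μ {t}} ∧
    {t ∈ Set.Ioc (0 : ℝ) T | (⨅ n : ℕ, L n t) < gStar μ g t}.Countable := by
  have hsub : {t ∈ Ioc (0 : ℝ) T | (⨅ n : ℕ, L n t) < gStar μ g t} ⊆ {t : ℝ | 0 < μ {t}} := by
    rintro t ⟨htT, hlt⟩
    refine (pos_iff_ne_zero (a := μ {t})).mpr fun hatom => hlt.not_ge ?_
    exact le_iInf fun n => (iInf_le _ n).trans (gnProc_le_of_tendsto_nhdsLT hatom (hL n t htT))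
  refine ⟨hsub, Countable.mono hsub ?_⟩
  simpa using Measure.countable_meas_level_set_pos (μ := μ) measurable_id

/-- The set `{t ∈ (0,T] : g*₋(t) < g*(t)}` is contained in the set of atoms of `μ`, and is
therefore countable. Here `L n t` denotes the left limit `gⁿ(t−)` and
`g*₋(t) = inf_n L n t`, `g*(t) = inf_n gⁿ(t)`. -/
theorem stmt_9 (T : ℝ) (hT : 0 < T) (μ : Measure ℝ) [IsFiniteMeasure μ]
    (hsupp : μ (Set.Ioc (0 : ℝ) T)ᶜ = 0)
    (g : ℝ → ℝ) (hg : Measurable g)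
    (α₀ : ℝ) (hbdd : ∀ᵐ s ∂μ, s ∈ Set.Ioc (0 : ℝ) T → g s ≤ α₀)
    (L : ℕ → ℝ → EReal)
    (hL : ∀ n : ℕ, ∀ t ∈ Set.Ioc (0 : ℝ) T, Tendsto (gnProc μ g n) (𝓝[<] t) (𝓝 (L n t))) :
    {t ∈ Set.Ioc (0 : ℝ) T | (⨅ n : ℕ, L n t) < gStar μ g t} ⊆ {t : ℝ | 0 < μ {t}} ∧
    {t ∈ Set.Ioc (0 : ℝ) T | (⨅ n : ℕ, L n t) < gStar μ g t}.Countable :=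
  stmt_9_general T μ g L hL
end
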